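/- arXiv:1808.00672 — 2 statements merged into one kernel-verified Lean document; each statement's English description precedes it below -/
import Mathlib

section
/- Let M = {(i₀,j₀), (i₀+1,j₀)} be two horizontally adjacent marked vertices on the n×n torus (n ≥ 3), and let U' = S·(I⊗C)·(Q⊗I₅) be the search step, where Q flips the sign of the position amplitudes at marked vertices. Then the state |φ_stat^a⟩ = Σ_{i,j} |i,j⟩|s_cᵃ⟩ − (4+l)a(|i₀,j₀,→⟩ + |i₀+1,j₀,←⟩), where |s_cᵃ⟩ = a(|↑⟩+|↓⟩+|←⟩+|→⟩+√l|↺⟩), satisfies U'|φ_stat^a⟩ = |φ_stat^a⟩ for every real a. -/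
open Matrix

/-- Basis index of the walk space on the `n×n` torus with a 5-dimensional coin:
position `(i,j) ∈ (ℤ/nℤ)²` and coin `c ∈ Fin 5` with `0=↑, 1=↓, 2=←, 3=→, 4=↺`. -/
abbrev WalkIdx (n : ℕ) := ZMod n × ZMod n × Fin 5

/-- The action of the flip-flop shift with self-loop on basis indices. -/
def shiftIdx (n : ℕ) : WalkIdx n → WalkIdx n
  | (i, j, c) =>
    if c = 0 then (i, j + 1, 1)
    else if c = 1 then (i, j - 1, 0)
    else if c = 2 then (i - 1, j, 3)
    else if c = 3 then (i + 1, j, 2)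
    else (i, j, c)

/-- The flip-flop shift operator with self-loop, as a matrix:
`S|i,j,↑⟩=|i,j+1,↓⟩`, `S|i,j,↓⟩=|i,j−1,↑⟩`, `S|i,j,←⟩=|i−1,j,→⟩`,
`S|i,j,→⟩=|i+1,j,←⟩`, `S|i,j,↺⟩=|i,j,↺⟩` (indices mod `n`). -/
noncomputable def shiftOp (n : ℕ) : Matrix (WalkIdx n) (WalkIdx n) ℂ :=
  fun x y => if x = shiftIdx n y then 1 else 0

/-- The Grover self-loop coin state `|s_c⟩`. -/
noncomputable def scState (l : ℝ) : Fin 5 → ℂ :=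
  fun c => if c = 4 then (Real.sqrt l : ℂ) / (Real.sqrt (4 + l) : ℂ)
           else 1 / (Real.sqrt (4 + l) : ℂ)

/-- The 5-dimensional Grover coin `C = 2|s_c⟩⟨s_c| − I₅`. -/
noncomputable def groverCoin (l : ℝ) : Matrix (Fin 5) (Fin 5) ℂ :=
  (2 : ℂ) • Matrix.vecMulVec (scState l) (star (scState l)) - 1

/-- The coin operator `I ⊗ C` on the full walk space. -/
noncomputable def coinOp (n : ℕ) (l : ℝ) : Matrix (WalkIdx n) (WalkIdx n) ℂ :=
  fun x y => if x.1 = y.1 ∧ x.2.1 = y.2.1 then groverCoin l x.2.2 y.2.2 else 0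

/-- One step of the lackadaisical walk (without search): `U = S·(I ⊗ C)`. -/
noncomputable def walkOp (n : ℕ) [NeZero n] (l : ℝ) : Matrix (WalkIdx n) (WalkIdx n) ℂ :=
  shiftOp n * coinOp n l

/-- The query `Q ⊗ I₅`: flips the sign at the marked vertices `M`. -/
noncomputable def queryOp (n : ℕ) (M : Finset (ZMod n × ZMod n)) :
    Matrix (WalkIdx n) (WalkIdx n) ℂ :=
  fun x y => if x = y then (if (x.1, x.2.1) ∈ M then -1 else 1) else 0

/-- One step of the search walk: `U' = S·(I⊗C)·(Q⊗I₅)`. -/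
noncomputable def searchOp (n : ℕ) [NeZero n] (l : ℝ) (M : Finset (ZMod n × ZMod n)) :
    Matrix (WalkIdx n) (WalkIdx n) ℂ :=
  shiftOp n * coinOp n l * queryOp n M

/-- The uniform initial state `|ψ(0)⟩ = (1/n) Σ_{i,j} |i,j⟩ ⊗ |s_c⟩`. -/
noncomputable def psi0 (n : ℕ) (l : ℝ) : WalkIdx n → ℂ :=
  fun x => (1 / (n : ℂ)) * scState l x.2.2

/-- The coin part `|s_cᵃ⟩ = a(|↑⟩+|↓⟩+|←⟩+|→⟩+√l|↺⟩)` of the stationary state. -/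
noncomputable def scA (l a : ℝ) : Fin 5 → ℂ :=
  fun c => (a : ℂ) * (if c = 4 then (Real.sqrt l : ℂ) else 1)

/-- The stationary state for two horizontally adjacent marked vertices
`(i₀,j₀)` and `(i₀+1,j₀)`:
`|φ_stat^a⟩ = Σ_{i,j} |i,j⟩|s_cᵃ⟩ − (4+l)a(|i₀,j₀,→⟩ + |i₀+1,j₀,←⟩)`. -/
noncomputable def phiStat (n : ℕ) (l a : ℝ) (i₀ j₀ : ZMod n) : WalkIdx n → ℂ :=
  fun x => scA l a x.2.2 -
    (if x = (i₀, j₀, (3 : Fin 5)) ∨ x = (i₀ + 1, j₀, (2 : Fin 5))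
     then ((4 + l : ℝ) : ℂ) * (a : ℂ) else 0)

/-!
On an unmarked vertex the coin part of `φ_stat^a` is `a√(4+l)·|s_c⟩`, which `C` fixes. On a marked
vertex the defect `(4+l)a` in one arrow exactly cancels the overlap `a√(4+l)` with `|s_c⟩`, so the
coin part is orthogonal to `|s_c⟩` and is negated by both `Q` and `C`. Finally the shift preserves
the uniform part and swaps the two defect arrows `|i₀,j₀,→⟩` and `|i₀+1,j₀,←⟩`.
-/

theorem shiftIdx_involutive (n : ℕ) : Function.Involutive (shiftIdx n) := by
  rintro ⟨i, j, c⟩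
  fin_cases c <;> simp [shiftIdx]

theorem shiftOp_mulVec_apply (n : ℕ) [NeZero n] (v : WalkIdx n → ℂ) (x : WalkIdx n) :
    (shiftOp n *ᵥ v) x = v (shiftIdx n x) := by
  simp only [mulVec, dotProduct, shiftOp, ← (shiftIdx_involutive n).eq_iff, ite_mul, one_mul,
    zero_mul, Finset.sum_ite_eq, Finset.mem_univ, if_true]

theorem queryOp_mulVec_apply (n : ℕ) [NeZero n] (M : Finset (ZMod n × ZMod n))
    (v : WalkIdx n → ℂ) (x : WalkIdx n) :
    (queryOp n M *ᵥ v) x = (if (x.1, x.2.1) ∈ M then -1 else 1) * v x := by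
  simp only [mulVec, dotProduct, queryOp, ite_mul, zero_mul, Finset.sum_ite_eq, Finset.mem_univ,
    if_true]

theorem coinOp_mulVec_apply (n : ℕ) [NeZero n] (l : ℝ) (v : WalkIdx n → ℂ)
    (i j : ZMod n) (c : Fin 5) :
    (coinOp n l *ᵥ v) (i, j, c) = (groverCoin l *ᵥ fun c' => v (i, j, c')) c := by
  simp only [mulVec, dotProduct, coinOp, Fintype.sum_prod_type, ite_and, ite_mul, zero_mul,
    Finset.sum_ite_irrel, Finset.sum_const_zero, Finset.sum_ite_eq, Finset.mem_univ, if_true]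

theorem star_scState (l : ℝ) : star (scState l) = scState l := by
  funext c
  simp only [Pi.star_apply, scState]
  split <;> simp [Complex.conj_ofReal]

theorem groverCoin_mulVec (l : ℝ) (w : Fin 5 → ℂ) :
    groverCoin l *ᵥ w = (2 * (scState l ⬝ᵥ w)) • scState l - w := by
  rw [groverCoin, sub_mulVec, smul_mulVec, vecMulVec_mulVec, star_scState, op_smul_eq_smul,
    one_mulVec, smul_smul]

theorem scState_dotProduct_self {l : ℝ} (hl : 0 ≤ l) : scState l ⬝ᵥ scState l = 1 := by
  have hpos : (Real.sqrt (4 + l) : ℂ) ≠ 0 := by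
    exact_mod_cast (Real.sqrt_pos.mpr (by linarith)).ne'
  have hsq : (Real.sqrt (4 + l) : ℂ) ^ 2 = 4 + l := by
    exact_mod_cast Real.sq_sqrt (by linarith)
  have hsql : (Real.sqrt l : ℂ) ^ 2 = l := by exact_mod_cast Real.sq_sqrt hl
  simp only [dotProduct, Fin.sum_univ_five, scState]
  simp only [Fin.isValue, Fin.reduceEq, ↓reduceIte, one_div]
  field_simp
  linear_combination hsql - hsq

theorem groverCoin_mulVec_of_dotProduct_eq_zero {l : ℝ} {w : Fin 5 → ℂ}
    (hw : scState l ⬝ᵥ w = 0) : groverCoin l *ᵥ w = -w := by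
  rw [groverCoin_mulVec, hw, mul_zero, zero_smul, zero_sub]

theorem groverCoin_mulVec_scState {l : ℝ} (hl : 0 ≤ l) :
    groverCoin l *ᵥ scState l = scState l := by
  rw [groverCoin_mulVec, scState_dotProduct_self hl, mul_one, two_smul, add_sub_cancel_right]

theorem scA_eq_smul_scState {l : ℝ} (hl : -4 < l) (a : ℝ) :
    scA l a = ((a : ℂ) * Real.sqrt (4 + l)) • scState l := by
  have hpos : (Real.sqrt (4 + l) : ℂ) ≠ 0 := by
    exact_mod_cast (Real.sqrt_pos.mpr (by linarith)).ne'
  funext c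
  simp only [scA, scState, Pi.smul_apply, smul_eq_mul]
  split <;> field_simp

theorem groverCoin_mulVec_scA {l : ℝ} (hl : 0 ≤ l) (a : ℝ) :
    groverCoin l *ᵥ scA l a = scA l a := by
  rw [scA_eq_smul_scState (by linarith), mulVec_smul, groverCoin_mulVec_scState hl]

theorem scState_dotProduct_scA_sub_single {l : ℝ} (hl : 0 ≤ l) (a : ℝ) {c₀ : Fin 5}
    (hc₀ : c₀ ≠ 4) :
    scState l ⬝ᵥ (scA l a - Pi.single c₀ (((4 + l : ℝ) : ℂ) * a)) = 0 := by
  have hpos : (Real.sqrt (4 + l) : ℂ) ≠ 0 := by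
    exact_mod_cast (Real.sqrt_pos.mpr (by linarith)).ne'
  have hsq : (Real.sqrt (4 + l) : ℂ) ^ 2 = ((4 + l : ℝ) : ℂ) := by
    exact_mod_cast Real.sq_sqrt (by linarith)
  rw [dotProduct_sub, scA_eq_smul_scState (by linarith), dotProduct_smul,
    scState_dotProduct_self hl, dotProduct_single, scState, if_neg hc₀, smul_eq_mul]
  field_simp
  linear_combination (a : ℂ) * hsq

theorem groverCoin_mulVec_scA_sub_single {l : ℝ} (hl : 0 ≤ l) (a : ℝ) {c₀ : Fin 5}
    (hc₀ : c₀ ≠ 4) :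
    groverCoin l *ᵥ (scA l a - Pi.single c₀ (((4 + l : ℝ) : ℂ) * a)) =
      -(scA l a - Pi.single c₀ (((4 + l : ℝ) : ℂ) * a)) :=
  groverCoin_mulVec_of_dotProduct_eq_zero (scState_dotProduct_scA_sub_single hl a hc₀)

theorem coinOp_mulVec_queryOp_mulVec_eq_self {n : ℕ} [NeZero n] {l : ℝ}
    {M : Finset (ZMod n × ZMod n)} {v : WalkIdx n → ℂ}
    (hmarked : ∀ i j, (i, j) ∈ M → groverCoin l *ᵥ (fun c => v (i, j, c)) = -fun c => v (i, j, c))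
    (hunmarked : ∀ i j, (i, j) ∉ M →
      groverCoin l *ᵥ (fun c => v (i, j, c)) = fun c => v (i, j, c)) :
    coinOp n l *ᵥ (queryOp n M *ᵥ v) = v := by
  funext ⟨i, j, c⟩
  simp only [coinOp_mulVec_apply, queryOp_mulVec_apply]
  by_cases h : (i, j) ∈ M
  · simp only [h, if_true, neg_one_mul]
    rw [show (fun c' => -v (i, j, c')) = -fun c' => v (i, j, c') from rfl, mulVec_neg,
      hmarked i j h, neg_neg]
  · simp only [h, if_false, one_mul]
    rw [hunmarked i j h]

theorem phiStat_slice_left {n : ℕ} (h1 : (1 : ZMod n) ≠ 0) (l a : ℝ) (i₀ j₀ : ZMod n) :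
    (fun c => phiStat n l a i₀ j₀ (i₀, j₀, c)) =
      scA l a - Pi.single 3 (((4 + l : ℝ) : ℂ) * a) := by
  funext c
  simp [phiStat, Pi.single_apply, h1]

theorem phiStat_slice_right {n : ℕ} (h1 : (1 : ZMod n) ≠ 0) (l a : ℝ) (i₀ j₀ : ZMod n) :
    (fun c => phiStat n l a i₀ j₀ (i₀ + 1, j₀, c)) =
      scA l a - Pi.single 2 (((4 + l : ℝ) : ℂ) * a) := by
  funext c
  simp [phiStat, Pi.single_apply, h1]

theorem phiStat_slice_of_not_mem {n : ℕ} (l a : ℝ) {i₀ j₀ i j : ZMod n}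
    (h : (i, j) ∉ ({(i₀, j₀), (i₀ + 1, j₀)} : Finset (ZMod n × ZMod n))) :
    (fun c => phiStat n l a i₀ j₀ (i, j, c)) = scA l a := by
  funext c
  simp only [Finset.mem_insert, Finset.mem_singleton, Prod.mk.injEq, not_or] at h
  simp only [phiStat, Prod.mk.injEq]
  rw [if_neg (by tauto), sub_zero]

theorem phiStat_shiftIdx (n : ℕ) (l a : ℝ) (i₀ j₀ : ZMod n) (x : WalkIdx n) :
    phiStat n l a i₀ j₀ (shiftIdx n x) = phiStat n l a i₀ j₀ x := by
  have hscA : scA l a (shiftIdx n x).2.2 = scA l a x.2.2 := by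
    obtain ⟨i, j, c⟩ := x
    fin_cases c <;> simp [shiftIdx, scA]
  have hdefect : shiftIdx n x = (i₀, j₀, 3) ∨ shiftIdx n x = (i₀ + 1, j₀, 2) ↔
      x = (i₀, j₀, 3) ∨ x = (i₀ + 1, j₀, 2) := by
    rw [(shiftIdx_involutive n).eq_iff, (shiftIdx_involutive n).eq_iff, or_comm]
    simp [shiftIdx]
  simp only [phiStat, hscA, hdefect]

/-- Lemma 1: for two horizontally adjacent marked vertices, the stationary state
is fixed by the search step `U' = S·(I⊗C)·(Q⊗I₅)`. -/
theorem phiStat_fixed (n : ℕ) [NeZero n] (hn : 3 ≤ n) (l a : ℝ) (hl : 0 < l)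
    (i₀ j₀ : ZMod n) :
    (searchOp n l {(i₀, j₀), (i₀ + 1, j₀)}).mulVec (phiStat n l a i₀ j₀) =
      phiStat n l a i₀ j₀ := by
  have h1 : (1 : ZMod n) ≠ 0 := by
    have : Fact (1 < n) := ⟨by omega⟩
    exact one_ne_zero
  have hcq : coinOp n l *ᵥ (queryOp n {(i₀, j₀), (i₀ + 1, j₀)} *ᵥ phiStat n l a i₀ j₀) =
      phiStat n l a i₀ j₀ := by
    apply coinOp_mulVec_queryOp_mulVec_eq_self
    · intro i j hij
      simp only [Finset.mem_insert, Finset.mem_singleton, Prod.mk.injEq] at hij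
      rcases hij with ⟨rfl, rfl⟩ | ⟨rfl, rfl⟩
      · rw [phiStat_slice_left h1, groverCoin_mulVec_scA_sub_single hl.le a (by decide)]
      · rw [phiStat_slice_right h1, groverCoin_mulVec_scA_sub_single hl.le a (by decide)]
    · intro i j hij
      rw [phiStat_slice_of_not_mem l a hij, groverCoin_mulVec_scA hl.le]
  funext x
  rw [searchOp, ← mulVec_mulVec, ← mulVec_mulVec, hcq, shiftOp_mulVec_apply, phiStat_shiftIdx]
end

section
/- For any real a, the stationary state |φ_stat^a⟩ = Σ_{i,j}|i,j⟩|s_cᵃ⟩ − (4+l)a(|i₀,j₀,→⟩ + |i₀+1,j₀,←⟩) has squared norm ||φ_stat^a||² = a²( (4+l)n² + 2(4+l)² − 4(4+l) ) = a²(4+l)(n² + 4 + 2l). -/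
open Matrix

/-- The squared norm of the stationary state:
`‖φ_stat^a‖² = a²(4+l)(n² + 4 + 2l)`. -/
theorem phiStat_sq_norm (n : ℕ) [NeZero n] (l a : ℝ) (hl : 0 < l)
    (i₀ j₀ : ZMod n) :
    ∑ x : WalkIdx n, ‖phiStat n l a i₀ j₀ x‖ ^ 2 =
      a ^ 2 * (4 + l) * ((n : ℝ) ^ 2 + 4 + 2 * l) := by
  classical
  set p₁ : WalkIdx n := (i₀, j₀, (3 : Fin 5)) with hp₁
  set p₂ : WalkIdx n := (i₀ + 1, j₀, (2 : Fin 5)) with hp₂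
  have hne : p₁ ≠ p₂ := by
    simp only [hp₁, hp₂, Prod.mk.injEq, ne_eq, not_and]
    intro _ _; decide
  set d : ℝ := (3 + l) ^ 2 * a ^ 2 - a ^ 2 with hd
  have hr : ∀ r : ℝ, ‖(r : ℂ)‖ ^ 2 = r ^ 2 := fun r => by
    rw [Complex.norm_real, Real.norm_eq_abs, sq_abs]
  have e2 : scA l a (2 : Fin 5) = ((a : ℝ) : ℂ) := by simp [scA]
  have e3 : scA l a (3 : Fin 5) = ((a : ℝ) : ℂ) := by simp [scA]
  have hval : ∀ x : WalkIdx n, ‖phiStat n l a i₀ j₀ x‖ ^ 2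
      = ‖scA l a x.2.2‖ ^ 2
        + ((if x = p₁ then d else 0) + (if x = p₂ then d else 0)) := by
    intro x
    by_cases h1 : x = p₁
    · subst h1
      have hv : phiStat n l a i₀ j₀ p₁ = ((-(3 + l) * a : ℝ) : ℂ) := by
        simp only [phiStat, hp₁, or_iff_left_iff_imp]
        rw [if_pos (by simp)]
        rw [e3]
        push_cast; ring
      rw [hv, hr, if_pos rfl, if_neg hne,
        show (p₁ : WalkIdx n).2.2 = (3 : Fin 5) from rfl, e3, hr, hd]
      ring
    · by_cases h2 : x = p₂
      · subst h2
        have hv : phiStat n l a i₀ j₀ p₂ = ((-(3 + l) * a : ℝ) : ℂ) := by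
          simp only [phiStat, hp₂]
          rw [if_pos (by simp)]
          rw [e2]
          push_cast; ring
        rw [hv, hr, if_neg h1, if_pos rfl,
          show (p₂ : WalkIdx n).2.2 = (2 : Fin 5) from rfl, e2, hr, hd]
        ring
      · have hv : phiStat n l a i₀ j₀ x = scA l a x.2.2 := by
          simp [phiStat, hp₁ ▸ h1, hp₂ ▸ h2]
        rw [hv, if_neg h1, if_neg h2]
        ring
  rw [Finset.sum_congr rfl (fun x _ => hval x)]
  rw [Finset.sum_add_distrib, Finset.sum_add_distrib,
    Finset.sum_ite_eq' Finset.univ p₁ (fun _ => d),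
    Finset.sum_ite_eq' Finset.univ p₂ (fun _ => d)]
  have hcoin : ∑ c : Fin 5, ‖scA l a c‖ ^ 2 = (4 + l) * a ^ 2 := by
    have e0 : scA l a (0 : Fin 5) = ((a : ℝ) : ℂ) := by simp [scA]
    have e1 : scA l a (1 : Fin 5) = ((a : ℝ) : ℂ) := by simp [scA]
    have e4 : scA l a (4 : Fin 5) = ((a * Real.sqrt l : ℝ) : ℂ) := by
      simp [scA]
    rw [Fin.sum_univ_five, e0, e1, e2, e3, e4]
    simp only [hr]
    rw [mul_pow, Real.sq_sqrt hl.le]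
    ring
  have hmain : ∑ x : WalkIdx n, ‖scA l a x.2.2‖ ^ 2
      = (n : ℝ) ^ 2 * ((4 + l) * a ^ 2) := by
    simp only [Fintype.sum_prod_type, hcoin, Finset.sum_const,
      Finset.card_univ, ZMod.card, nsmul_eq_mul]
    ring
  rw [hmain, hd]
  simp only [Finset.mem_univ, if_pos]
  ring
end
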